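/- arXiv:1707.07763 — 2 statements merged into one kernel-verified Lean document; each statement's English description precedes it below -/
import Mathlib

section
/- Let Y be a finite nonempty set and let T be a finite set of interpretations I each assigned a real weight w(I), and let φ : T × Y → Prop. Then Σ_{I ∈ T, ∃y φ(I,y)} w(I) = Σ_{I ∈ T, ∀y (φ(I,y) → true)} w(I)·1 + Σ_{I ∈ T, ∀y ¬φ(I,y)} w(I)·(-1) evaluated as: the weighted count of interpretations satisfying ∃y φ(I,y) equals the signed weighted count over extended interpretations (I, a) with a ∈ Bool, weight w(I)·s(a) (s(true)=1, s(false)=-1), satisfying ∀y (φ(I,y) → a = true). -/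
/-! The constraint `∀ y, φ I y → a = true` is equivalent to `(∃ y, φ I y) → a = true`. When `I`
has a witness it forces `a = true`, contributing `w I * s true = w I`; when it has none, both
values of `a` are admitted and their contributions `w I * s true + w I * s false` cancel. -/

open Finset

theorem sum_filter_imp_eq_true {M : Type*} [AddCommMonoid M] (P : Prop) [Decidable P]
    (s : Bool → M) (hs : s true + s false = 0) :
    ∑ a ∈ univ.filter (fun a : Bool => P → a = true), s a = if P then s true else 0 := by
  by_cases hP : P
  · simp [hP, filter_eq']
  · simp [hP, hs]

theorem stmt_1_general {T : Type*} [Fintype T] {Y : Type*} [Fintype Y]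
    (w : T → ℝ) (φ : T → Y → Prop) [∀ I y, Decidable (φ I y)]
    (s : Bool → ℝ) (hs1 : s true = 1) (hs2 : s false = -1) :
    ∑ I ∈ Finset.univ.filter (fun I : T => ∃ y : Y, φ I y), w I =
      ∑ p ∈ Finset.univ.filter (fun p : T × Bool => ∀ y : Y, φ p.1 y → p.2 = true),
        w p.1 * s p.2 := by
  have hs : s true + s false = 0 := by rw [hs1, hs2]; norm_num
  simp only [← exists_imp]
  rw [sum_filter, sum_filter, Fintype.sum_prod_type]
  refine sum_congr rfl fun I _ => ?_
  rw [← sum_filter]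
  dsimp only
  rw [← mul_sum, sum_filter_imp_eq_true _ s hs, hs1, mul_ite, mul_one, mul_zero]

theorem stmt_1 {T : Type*} [Fintype T] {Y : Type*} [Fintype Y] [Nonempty Y]
    (w : T → ℝ) (φ : T → Y → Prop) [∀ I y, Decidable (φ I y)]
    (s : Bool → ℝ) (hs1 : s true = 1) (hs2 : s false = -1) :
    ∑ I ∈ Finset.univ.filter (fun I : T => ∃ y : Y, φ I y), w I =
      ∑ p ∈ Finset.univ.filter (fun p : T × Bool => ∀ y : Y, φ p.1 y → p.2 = true),
        w p.1 * s p.2 :=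
  stmt_1_general w φ s hs1 hs2
end

section
/- Fix finite sets C, P with |C| = |P| = n and weights w : Bool → ℝ with w(true) = w(false) = 1. The weighted model count of the Skolemized deck-of-cards theory — over relations S ⊆ C × P together with A ⊆ C and B ⊆ P, with clauses ∀c,p: ¬S(c,p) ∨ A(c); ∀c,p: ¬S(c,p) ∨ B(p); ∀p, distinct c₁,c₂: ¬S(c₁,p) ∨ ¬S(c₂,p), where each interpretation has weight (−1)^(|C \ A| + |P \ B|) — equals n!, the model count of the original (non-Skolemized) theory. -/
/-!
For a fixed relation `S`, the signed sum over Skolem predicates `A` factorises over the elements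
`c`: the factor of `c` is `1` (for `A c` true) plus `-1` (for `A c` false, which the clause allows
only when row `c` of `S` is empty). So it vanishes unless every row of `S` is non-empty, and likewise
for `B` and the columns. The relations that survive are exactly the graphs of bijections `P ≃ C`,
of which there are `n!`.
-/

open Finset

section

variable {α R : Type*} [Fintype α] [CommRing R]

theorem prod_ite_eq_neg_one_pow (A : α → Bool) :
    ∏ a, (if A a then (1 : R) else -1) = (-1) ^ #{a | A a = false} := by
  rw [prod_ite, prod_const_one, one_mul, prod_const]
  simp

theorem sum_neg_one_pow_card_false_of_forall_imp [DecidableEq α] (occ : α → Prop)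
    [DecidablePred occ] :
    ∑ A : α → Bool with ∀ a, occ a → A a = true,
        (-1 : R) ^ #{a | A a = false} = if ∀ a, occ a then 1 else 0 := by
  -- the factor of `a` in the summand: the sign of `b`, killed when `occ a` forbids `b = false`
  set h : α → Bool → R := fun a b => if b then 1 else if occ a then 0 else -1
  have hprod (A : α → Bool) : ∏ a, h a (A a) =
      if ∀ a, occ a → A a = true then (-1) ^ #{a | A a = false} else 0 := by
    split_ifs with hA
    · rw [← prod_ite_eq_neg_one_pow]
      refine prod_congr rfl fun a _ => ?_
      cases hAa : A a
      · have hna : ¬ occ a := fun ha => by simpa [hAa] using hA a ha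
        simp [h, hna]
      · simp [h]
    · obtain ⟨a, ha, hAa⟩ : ∃ a, occ a ∧ A a = false := by simpa using hA
      exact prod_eq_zero (mem_univ a) (by simp [h, ha, hAa])
  have hsum (a : α) : ∑ b, h a b = if occ a then 1 else 0 := by
    by_cases ha : occ a <;> simp [h, ha]
  rw [sum_filter, ← Fintype.prod_boole]
  simp only [← hprod, ← hsum, Fintype.prod_sum]

theorem sum_neg_one_pow_card_false_of_clause_left {β : Type*} [Fintype β] [DecidableEq α]
    (S : α → β → Bool) :
    ∑ A : α → Bool with ∀ a b, ¬ S a b = true ∨ A a = true,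
        (-1 : R) ^ #{a | A a = false} = if ∀ a, ∃ b, S a b = true then 1 else 0 := by
  have hclause (A : α → Bool) : (∀ a b, ¬ S a b = true ∨ A a = true) ↔
      ∀ a, (∃ b, S a b = true) → A a = true := by
    simp only [forall_exists_index, ← imp_iff_not_or]
  simp only [hclause]
  exact sum_neg_one_pow_card_false_of_forall_imp _

theorem sum_neg_one_pow_card_false_of_clause_right {β : Type*} [Fintype β] [DecidableEq α]
    (S : β → α → Bool) :
    ∑ A : α → Bool with ∀ b a, ¬ S b a = true ∨ A a = true,
        (-1 : R) ^ #{a | A a = false} = if ∀ a, ∃ b, S b a = true then 1 else 0 := by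
  simp only [forall_comm (α := β)]
  exact sum_neg_one_pow_card_false_of_clause_left fun a b => S b a

end

theorem sum_filter_prod_prod_mul {α β γ R : Type*} [Fintype α] [Fintype β] [Fintype γ]
    [CommSemiring R] (p : α → β → Prop) (q : α → γ → Prop) (r : α → Prop)
    [∀ a, DecidablePred (p a)] [∀ a, DecidablePred (q a)] [DecidablePred r]
    (f : β → R) (g : γ → R) :
    ∑ x : α × β × γ with p x.1 x.2.1 ∧ q x.1 x.2.2 ∧ r x.1, f x.2.1 * g x.2.2 =
      ∑ a with r a, (∑ b with p a b, f b) * ∑ c with q a c, g c := by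
  rw [sum_filter, Fintype.sum_prod_type, sum_filter]
  refine sum_congr rfl fun a _ => ?_
  by_cases ha : r a
  · rw [if_pos ha, Fintype.sum_prod_type, sum_mul_sum, sum_filter]
    refine sum_congr rfl fun b _ => ?_
    rw [sum_filter]
    by_cases hb : p a b <;> simp [hb, ha]
  · simp [ha]

theorem card_bijective_relations {C P : Type*} [Fintype C] [Fintype P] [DecidableEq C]
    [DecidableEq P] (hcard : Fintype.card P = Fintype.card C) :
    #{S : C → P → Bool | (∀ p c₁ c₂, c₁ ≠ c₂ → ¬ S c₁ p = true ∨ ¬ S c₂ p = true) ∧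
      (∀ c, ∃ p, S c p = true) ∧ (∀ p, ∃ c, S c p = true)} = (Fintype.card P).factorial := by
  rw [← Fintype.card_equiv (Fintype.equivOfCardEq hcard), ← card_univ]
  symm
  refine card_bij (fun e _ c p => decide (e p = c)) ?_ ?_ ?_
  · intro e _
    simp only [mem_filter, mem_univ, true_and, decide_eq_true_eq]
    refine ⟨fun p c₁ c₂ hne => ?_, fun c => ⟨e.symm c, by simp⟩, fun p => ⟨e p, rfl⟩⟩
    by_cases h : e p = c₁
    · exact Or.inr (h ▸ hne)
    · exact Or.inl h
  · intro e₁ _ e₂ _ heq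
    ext p
    simpa using congrFun (congrFun heq (e₂ p)) p
  · intro S hS
    simp only [mem_filter, mem_univ, true_and] at hS
    obtain ⟨hunique, hrow, hcol⟩ := hS
    choose g hg using hcol
    have hgraph (c : C) (p : P) : S c p = true ↔ g p = c := by
      refine ⟨fun hcp => ?_, fun h => h ▸ hg p⟩
      by_contra hne
      exact (hunique p c (g p) (Ne.symm hne)).elim (· hcp) (· (hg p))
    have hsurj : Function.Surjective g := fun c =>
      (hrow c).imp fun p hp => (hgraph c p).1 hp
    have hbij := (Fintype.bijective_iff_surjective_and_card g).2 ⟨hsurj, hcard⟩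
    refine ⟨Equiv.ofBijective g hbij, mem_univ _, ?_⟩
    ext c p
    exact Bool.eq_iff_iff.2 (by simp [hgraph])

theorem stmt_15 {C P : Type*} [Fintype C] [Fintype P] [DecidableEq C] [DecidableEq P]
    (n : ℕ) (hC : Fintype.card C = n) (hP : Fintype.card P = n)
    (w : Bool → ℝ) (hwt : w true = 1) (hwf : w false = 1) :
    (∑ I ∈ Finset.univ.filter
        (fun I : (C → P → Bool) × (C → Bool) × (P → Bool) =>
          (∀ (c : C) (p : P), ¬ I.1 c p = true ∨ I.2.1 c = true) ∧
          (∀ (c : C) (p : P), ¬ I.1 c p = true ∨ I.2.2 p = true) ∧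
          (∀ (p : P) (c₁ c₂ : C), c₁ ≠ c₂ → (¬ I.1 c₁ p = true ∨ ¬ I.1 c₂ p = true))),
        (∏ c : C, ∏ p : P, w (I.1 c p)) *
        (-1 : ℝ) ^ ((Finset.univ.filter (fun c : C => I.2.1 c = false)).card +
                    (Finset.univ.filter (fun p : P => I.2.2 p = false)).card)) =
      (Nat.factorial n : ℝ) := by
  have hw (b : Bool) : w b = 1 := by cases b <;> assumption
  simp only [hw, prod_const_one, one_mul, pow_add]
  calc _ = ∑ S : C → P → Bool with
          ∀ p c₁ c₂, c₁ ≠ c₂ → ¬ S c₁ p = true ∨ ¬ S c₂ p = true,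
        (∑ A : C → Bool with ∀ c p, ¬ S c p = true ∨ A c = true, (-1 : ℝ) ^ #{c | A c = false}) *
          ∑ B : P → Bool with ∀ c p, ¬ S c p = true ∨ B p = true, (-1 : ℝ) ^ #{p | B p = false} :=
        sum_filter_prod_prod_mul _ _ _ _ _
    _ = n.factorial := by
      simp only [sum_neg_one_pow_card_false_of_clause_left,
        sum_neg_one_pow_card_false_of_clause_right, boole_mul, ← ite_and]
      rw [sum_boole, filter_filter, card_bijective_relations (hP.trans hC.symm), hP]
end
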